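/- Combining the conformal quantile lemma with the acceptance rule: let $(b_1,r_1,\hat r_1),\dots,(b_n,r_n,\hat r_n),(b,r,\hat r)$ be such that the residuals $e_i = r_i - \hat r_i$ and $e = r - \hat r$ are exchangeable real random variables, and let $q_\alpha$ be the $\lceil (n+1)(1-\alpha)\rceil$-th smallest residual among $e_1,\dots,e_n$ (assumed $\le n$). Then $\mathbb{P}[(r > c) \text{ and } (\hat r < c - q_\alpha)] \le \alpha$ for every $c \in \mathbb{R}$. -/

import Mathlib

/-
Split-conformal argument. If the test regret exceeds `c` while `r̂ < c - qα`, the test residual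
exceeds `qα`, so at least `k` residuals lie strictly below it: its strict rank among all `n + 1`
residuals is at least `k`. In any configuration at most `n + 1 - k` indices have strict rank
`≥ k`, and by exchangeability each index has this property with the same probability, so that
probability is at most `(n + 1 - k) / (n + 1) ≤ α`.
-/

open MeasureTheory ProbabilityTheory

/-- The `k`-th smallest element of a list of reals (1-indexed). -/
noncomputable def orderStat (l : List ℝ) (k : ℕ) : ℝ :=
  (l.insertionSort (· ≤ ·)).getD (k - 1) 0

def Exchangeable {Ω : Type*} [MeasureSpace Ω] {m : ℕ} (e : Fin m → Ω → ℝ) : Prop :=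
  ∀ σ : Equiv.Perm (Fin m),
    Measure.map (fun ω => fun i => e (σ i) ω) (ℙ : Measure Ω) =
      Measure.map (fun ω => fun i => e i ω) (ℙ : Measure Ω)

open scoped ENNReal

open Finset

lemma le_countP_of_orderStat_lt {l : List ℝ} {k : ℕ} {t : ℝ} (hkl : k ≤ l.length)
    (h : orderStat l k < t) : k ≤ l.countP (· < t) := by
  obtain _ | k := k
  · exact Nat.zero_le _
  set s := l.insertionSort (· ≤ ·)
  have hperm : s.Perm l := List.perm_insertionSort _ l
  have hks : k < s.length := by rw [hperm.length_eq]; omega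
  have hstat : orderStat l (k + 1) = s[k] := List.getD_eq_getElem _ _ hks
  have htake : ∀ x ∈ s.take (k + 1), x < t := by
    intro x hx
    obtain ⟨i, hi, rfl⟩ := List.mem_take_iff_getElem.mp hx
    rw [Nat.lt_min] at hi
    calc s[i] ≤ s[k] :=
          (List.pairwise_insertionSort _ l).rel_get_of_le (a := ⟨i, hi.2⟩) (b := ⟨k, hks⟩)
            (Fin.mk_le_mk.mpr (by omega))
      _ < t := hstat ▸ h
  calc k + 1 = (s.take (k + 1)).countP (· < t) := by
        rw [List.countP_eq_length.mpr (by simpa using htake), List.length_take]; omega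
    _ ≤ s.countP (· < t) := (List.take_sublist _ _).countP_le
    _ = l.countP (· < t) := hperm.countP_eq _

lemma List.countP_ofFn {α : Type*} {m : ℕ} (g : Fin m → α) (p : α → Prop)
    [DecidablePred p] :
    (List.ofFn g).countP (p ·) = #{i | p (g i)} := by
  rw [← Multiset.coe_countP, ← Fin.univ_val_map, Multiset.countP_map]
  rfl

section StrictRank

variable {ι α : Type*} [Fintype ι] [LinearOrder α]

def strictRank (f : ι → α) (j : ι) : ℕ := #{i | f i < f j}

lemma strictRank_comp_perm (f : ι → α) (σ : Equiv.Perm ι) (j : ι) :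
    strictRank (f ∘ σ) j = strictRank f (σ j) :=
  card_equiv σ (by simp)

-- The `k` coordinates below the smallest coordinate of rank `≥ k` all have rank `< k`.
lemma card_le_strictRank_le (f : ι → α) (k : ℕ) :
    #{j | k ≤ strictRank f j} ≤ Fintype.card ι - k := by
  classical
  obtain hS | hS := (univ.filter fun j => k ≤ strictRank f j).eq_empty_or_nonempty
  · simp [hS]
  obtain ⟨j₀, hj₀, hmin⟩ := exists_min_image _ f hS
  have hdisj :
      Disjoint (univ.filter fun i => f i < f j₀) (univ.filter fun j => k ≤ strictRank f j) :=
    disjoint_filter.mpr fun i _ hi hiS => (hmin i ((mem_filter_univ i).mpr hiS)).not_gt hi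
  have := card_union_of_disjoint hdisj ▸ card_le_univ _
  have hk : k ≤ strictRank f j₀ := (mem_filter_univ j₀).mp hj₀
  unfold strictRank at hk
  omega

lemma measurableSet_le_strictRank [Countable ι] (k : ℕ) (j : ι) :
    MeasurableSet {f : ι → ℝ | k ≤ strictRank f j} := by
  have : {f : ι → ℝ | k ≤ strictRank f j} =
      ⋃ (T : Finset ι) (_ : T.card = k), ⋂ i ∈ T, {f | f i < f j} := by
    ext f
    simp only [strictRank, Set.mem_ofPred_eq, Set.mem_iUnion, Set.mem_iInter]
    constructor
    · intro h
      obtain ⟨T, hT, rfl⟩ := exists_subset_card_eq h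
      exact ⟨T, rfl, fun i hi => (mem_filter_univ i).mp (hT hi)⟩
    · rintro ⟨T, rfl, hT⟩
      exact card_le_card fun i hi => (mem_filter_univ i).mpr (hT i hi)
  rw [this]
  exact .iUnion fun T => .iUnion fun _ => .biInter T.countable_toSet fun i _ =>
    measurableSet_lt (measurable_pi_apply i) (measurable_pi_apply j)

end StrictRank

open scoped Classical in
lemma sum_measure_le_of_forall_card_le {Ω ι : Type*} [MeasurableSpace Ω] (μ : Measure Ω)
    (s : Finset ι) {E : ι → Set Ω} (hE : ∀ j ∈ s, MeasurableSet (E j)) {N : ℕ}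
    (h : ∀ ω, #{j ∈ s | ω ∈ E j} ≤ N) :
    ∑ j ∈ s, μ (E j) ≤ N * μ Set.univ := by
  calc ∑ j ∈ s, μ (E j) = ∫⁻ ω, ∑ j ∈ s, (E j).indicator 1 ω ∂μ := by
        rw [lintegral_finsetSum _ fun j hj => measurable_one.indicator (hE j hj)]
        exact sum_congr rfl fun j hj => (lintegral_indicator_one (hE j hj)).symm
    _ = ∫⁻ ω, (#{j ∈ s | ω ∈ E j} : ℝ≥0∞) ∂μ := by
        simp only [Set.indicator_apply, Pi.one_apply, sum_boole]
    _ ≤ ∫⁻ _, (N : ℝ≥0∞) ∂μ :=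
        lintegral_mono fun ω => Nat.cast_le.mpr (by convert h ω)
    _ = N * μ Set.univ := lintegral_const _

section Exchangeable

variable {Ω : Type*} [MeasureSpace Ω] {m : ℕ} {e : Fin m → Ω → ℝ}

lemma Exchangeable.measure_preimage_comp_perm (hexch : Exchangeable e)
    (he : ∀ i, Measurable (e i)) (σ : Equiv.Perm (Fin m)) {A : Set (Fin m → ℝ)}
    (hA : MeasurableSet A) :
    ℙ {ω | (fun i => e (σ i) ω) ∈ A} = ℙ {ω | (fun i => e i ω) ∈ A} := by
  have := congrArg (· A) (hexch σ)
  rwa [Measure.map_apply (measurable_pi_lambda _ fun i => he (σ i)) hA,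
    Measure.map_apply (measurable_pi_lambda _ he) hA] at this

lemma Exchangeable.measure_le_strictRank_congr (hexch : Exchangeable e)
    (he : ∀ i, Measurable (e i)) (k : ℕ) (j j' : Fin m) :
    ℙ {ω | k ≤ strictRank (fun i => e i ω) j} =
      ℙ {ω | k ≤ strictRank (fun i => e i ω) j'} := by
  have hrank (ω : Ω) :
      strictRank (fun i => e (Equiv.swap j' j i) ω) j' = strictRank (fun i => e i ω) j := by
    rw [← Equiv.swap_apply_left j' j, ← strictRank_comp_perm, Equiv.swap_apply_left]
    rfl
  simpa only [Set.mem_ofPred_eq, hrank] using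
    hexch.measure_preimage_comp_perm he (Equiv.swap j' j) (measurableSet_le_strictRank k j')

theorem Exchangeable.measure_le_strictRank_le_div [IsProbabilityMeasure (ℙ : Measure Ω)]
    (hexch : Exchangeable e) (he : ∀ i, Measurable (e i)) (k : ℕ) (j : Fin m) :
    ℙ {ω | k ≤ strictRank (fun i => e i ω) j} ≤ ((m - k : ℕ) : ℝ≥0∞) / m := by
  have hsum := sum_measure_le_of_forall_card_le ℙ univ
    (E := fun j' => {ω | k ≤ strictRank (fun i => e i ω) j'})
    (fun j' _ => measurable_pi_lambda _ he (measurableSet_le_strictRank k j'))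
    (fun ω => by simpa using card_le_strictRank_le (fun i => e i ω) k)
  rw [measure_univ, mul_one,
    sum_congr rfl fun j' _ => hexch.measure_le_strictRank_congr he k j' j, sum_const,
    card_univ, Fintype.card_fin, nsmul_eq_mul] at hsum
  have hm : (m : ℝ≥0∞) ≠ 0 := by simpa using j.pos.ne'
  rw [ENNReal.le_div_iff_mul_le (.inl hm) (.inl (ENNReal.natCast_ne_top m)), mul_comm]
  exact hsum

end Exchangeable

lemma le_strictRank_last_of_orderStat_lt {n k : ℕ} (f : Fin (n + 1) → ℝ) (hkn : k ≤ n)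
    (h : orderStat (List.ofFn fun i : Fin n => f i.castSucc) k < f (Fin.last n)) :
    k ≤ strictRank f (Fin.last n) := by
  have hcount := le_countP_of_orderStat_lt (by simpa using hkn) h
  rw [List.countP_ofFn] at hcount
  exact hcount.trans <| card_le_card_of_injOn Fin.castSucc
    (fun i hi => by simpa using hi) (Fin.castSucc_injective n).injOn

theorem regret_calibration_general
    {Ω : Type*} [MeasureSpace Ω] [IsProbabilityMeasure (ℙ : Measure Ω)]
    {n : ℕ} (α : ℝ)
    (r rhat : Fin (n + 1) → Ω → ℝ)
    (hr : ∀ i, Measurable (r i)) (hrhat : ∀ i, Measurable (rhat i))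
    (e : Fin (n + 1) → Ω → ℝ) (he : ∀ i ω, e i ω = r i ω - rhat i ω)
    (hexch : Exchangeable e)
    (k : ℕ) (hk : k = ⌈((n : ℝ) + 1) * (1 - α)⌉₊) (hkn : k ≤ n)
    (qα : Ω → ℝ)
    (hq : ∀ ω, qα ω = orderStat (List.ofFn (fun i : Fin n => e i.castSucc ω)) k) :
    ∀ c : ℝ,
      ℙ {ω | r (Fin.last n) ω > c ∧ rhat (Fin.last n) ω < c - qα ω} ≤
        ENNReal.ofReal α := by
  intro c
  have he_meas (i : Fin (n + 1)) : Measurable (e i) :=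
    funext (he i) ▸ (hr i).sub (hrhat i)
  have hrate : ((n + 1 - k : ℕ) : ℝ) ≤ (n + 1 : ℕ) * α := by
    have : ((n : ℝ) + 1) * (1 - α) ≤ k := hk ▸ Nat.le_ceil _
    push_cast [Nat.cast_sub (by omega : k ≤ n + 1)]
    linarith
  calc ℙ {ω | r (Fin.last n) ω > c ∧ rhat (Fin.last n) ω < c - qα ω}
      ≤ ℙ {ω | k ≤ strictRank (fun i => e i ω) (Fin.last n)} := by
        refine measure_mono fun ω ⟨hcr, hcrhat⟩ => le_strictRank_last_of_orderStat_lt _ hkn ?_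
        rw [← hq, he]
        linarith
    _ ≤ ((n + 1 - k : ℕ) : ℝ≥0∞) / (n + 1 : ℕ) :=
        hexch.measure_le_strictRank_le_div he_meas k _
    _ ≤ ENNReal.ofReal α := by
        refine ENNReal.div_le_of_le_mul ?_
        rw [← ENNReal.ofReal_natCast, ← ENNReal.ofReal_natCast,
          ← ENNReal.ofReal_mul' (Nat.cast_nonneg _)]
        exact ENNReal.ofReal_le_ofReal (by linarith)

/-- Theorem 2 of the paper (regret calibration guarantee): if the residuals of
the calibration auctions and the test auction are exchangeable, and `qα` is the
`⌈(n+1)(1-α)⌉`-th smallest calibration residual, then the probability that the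
true regret of the test auction exceeds `c` while the acceptance rule
`r̂ < c - qα` accepts it is at most `α`. -/
theorem regret_calibration
    {Ω : Type*} [MeasureSpace Ω] [IsProbabilityMeasure (ℙ : Measure Ω)]
    {n : ℕ} (hn : 1 ≤ n) (α : ℝ) (hα : 0 < α) (hα1 : α < 1)
    (r rhat : Fin (n + 1) → Ω → ℝ)
    (hr : ∀ i, Measurable (r i)) (hrhat : ∀ i, Measurable (rhat i))
    (e : Fin (n + 1) → Ω → ℝ) (he : ∀ i ω, e i ω = r i ω - rhat i ω)
    (hexch : Exchangeable e)
    (k : ℕ) (hk : k = ⌈((n : ℝ) + 1) * (1 - α)⌉₊) (hkn : k ≤ n)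
    (qα : Ω → ℝ)
    (hq : ∀ ω, qα ω = orderStat (List.ofFn (fun i : Fin n => e i.castSucc ω)) k) :
    ∀ c : ℝ,
      ℙ {ω | r (Fin.last n) ω > c ∧ rhat (Fin.last n) ω < c - qα ω} ≤
        ENNReal.ofReal α :=
  regret_calibration_general α r rhat hr hrhat e he hexch k hk hkn qα hq
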